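/- Let a ∈ L^∞(ℝ₊) ∩ L¹(ℝ₊) be continuous and piecewise C² on [0,∞) with lim_{x→∞} a(x) = 0 and a'' ∈ L¹(ℝ₊). Then the integral operator H_a on L²[1,∞) with kernel H_a(x,y) = −sin(2α)a(0)/(π(x+y)) + (1/π)∫_0^∞ cos((x+y)t − 2α) a(t) dt is Hilbert–Schmidt; in fact |H_a(x,y)| ≤ C/(x+y)² for some constant C. -/

import Mathlib

open MeasureTheory Set Filter

noncomputable section

/-- `f` is piecewise `Cⁿ` on `[0, ∞)`: there are points `0 = t₀ < t₁ < … < t_N` such that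
`f` is `n` times continuously differentiable on each `[tᵢ, tᵢ₊₁]` and on `[t_N, ∞)`,
one-sided derivatives being understood at the endpoints. -/
def PiecewiseCn (n : ℕ) (f : ℝ → ℂ) : Prop :=
  ∃ (N : ℕ) (t : Fin (N + 1) → ℝ), t 0 = 0 ∧ StrictMono t ∧
    (∀ i : Fin N, ContDiffOn ℝ n f (Set.Icc (t i.castSucc) (t i.succ))) ∧
    ContDiffOn ℝ n f (Set.Ici (t (Fin.last N)))

/-!
Write `ω = x + y` and `β = 2α`. On each interval where `a` is `C²`, integrating
`∫ cos (ω t - β) a(t) dt` by parts twice gives the boundary terms `sin (ω t - β) a(t) / ω`, plus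
`cos (ω t - β) a'(t) / ω²` and `-∫ cos (ω t - β) a''(t) dt / ω²`. Since `a` is continuous the
first boundary terms telescope; as `a(t) → 0` only `sin β · a(0) / ω` survives, and it cancels
the first term of the kernel. The remaining terms are `O(ω⁻²)`: there are finitely many break
points, and on the last interval `a'` is bounded because `a''` is integrable. Finally
`C / (x + y)²` is square integrable on `[1, ∞)²` because `(x + y)⁴ ≥ 16 x² y²`.
-/

open Topology intervalIntegral

theorem Fin.sum_succ_sub_castSucc {M : Type*} [AddCommGroup M] {N : ℕ} (f : Fin (N + 1) → M) :
    ∑ i : Fin N, (f i.succ - f i.castSucc) = f (Fin.last N) - f 0 := by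
  induction N with
  | zero => simp
  | succ N ih =>
    rw [Fin.sum_univ_castSucc, Fin.succ_last]
    have h := ih (fun j => f j.castSucc)
    simp only [Fin.succ_castSucc] at h ⊢
    rw [h]
    simp

section SecondDerivative

variable {E : Type*} [NormedAddCommGroup E] [NormedSpace ℝ E] {f : ℝ → E} {s : Set ℝ} {t : ℝ}

theorem ContDiffOn.hasDerivAt_derivWithin_deriv (hf : ContDiffOn ℝ 2 f s) (hs : s ∈ 𝓝 t) :
    HasDerivAt (derivWithin f s) (deriv (deriv f) t) t := by
  have hd : DifferentiableAt ℝ (deriv f) t :=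
    ((hf.contDiffAt hs).derivWithin (m := 1) (by norm_num)).differentiableAt one_ne_zero
  refine hd.hasDerivAt.congr_of_eventuallyEq ?_
  filter_upwards [eventually_mem_nhds_iff.2 hs] with x hx using derivWithin_of_mem_nhds hx

theorem norm_le_norm_add_integral_norm_deriv [CompleteSpace E] {f' : ℝ → E} {u v : ℝ}
    (huv : u ≤ v) (hf : ContinuousOn f (Icc u v))
    (hderiv : ∀ t ∈ Ioo u v, HasDerivAt f (f' t) t) (hint : IntegrableOn f' (Ioc u v)) :
    ‖f v‖ ≤ ‖f u‖ + ∫ t in Ioc u v, ‖f' t‖ := by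
  have hftc := integral_eq_sub_of_hasDerivAt_of_le huv hf hderiv
    ((intervalIntegrable_iff_integrableOn_Ioc_of_le huv).2 hint)
  calc ‖f v‖ = ‖f u + ∫ t in u..v, f' t‖ := by rw [hftc, add_sub_cancel]
    _ ≤ ‖f u‖ + ‖∫ t in u..v, f' t‖ := norm_add_le _ _
    _ ≤ ‖f u‖ + ∫ t in Ioc u v, ‖f' t‖ := by
      rw [integral_of_le huv]
      gcongr
      exact norm_integral_le_integral_norm _

end SecondDerivative

section Oscillatory

variable {β ω u v : ℝ} {a a' a'' : ℝ → ℂ}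

theorem hasDerivAt_ofReal_sin_mul_sub (β ω t : ℝ) :
    HasDerivAt (fun t : ℝ => (Real.sin (ω * t - β) : ℂ))
      (Real.cos (ω * t - β) * ω : ℂ) t := by
  have h := ((Real.hasDerivAt_sin _).comp t (((hasDerivAt_id t).const_mul ω).sub_const β))
  simpa using h.ofReal_comp

theorem hasDerivAt_ofReal_cos_mul_sub (β ω t : ℝ) :
    HasDerivAt (fun t : ℝ => (Real.cos (ω * t - β) : ℂ))
      (-Real.sin (ω * t - β) * ω : ℂ) t := by
  have h := ((Real.hasDerivAt_cos _).comp t (((hasDerivAt_id t).const_mul ω).sub_const β))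
  simpa using h.ofReal_comp

theorem norm_ofReal_cos_mul_le (x : ℝ) (z : ℂ) : ‖(Real.cos x : ℂ) * z‖ ≤ ‖z‖ := by
  rw [norm_mul, Complex.norm_real, Real.norm_eq_abs]
  exact mul_le_of_le_one_left (norm_nonneg z) (Real.abs_cos_le_one x)

theorem integral_cos_mul_eq (hω : ω ≠ 0) (huv : u ≤ v)
    (ha : ContinuousOn a (Icc u v))
    (ha' : ContinuousOn a' (Icc u v)) (hda : ∀ t ∈ Ioo u v, HasDerivAt a (a' t) t)
    (hda' : ∀ t ∈ Ioo u v, HasDerivAt a' (a'' t) t) (hint : IntegrableOn a'' (Ioc u v)) :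
    (∫ t in u..v, (Real.cos (ω * t - β) : ℂ) * a t)
      = ((Real.sin (ω * v - β) : ℂ) * a v - (Real.sin (ω * u - β) : ℂ) * a u) / ω
        + ((Real.cos (ω * v - β) : ℂ) * a' v - (Real.cos (ω * u - β) : ℂ) * a' u) / ω ^ 2
        - (∫ t in u..v, (Real.cos (ω * t - β) : ℂ) * a'' t) / ω ^ 2 := by
  have hωc : (ω : ℂ) ≠ 0 := by exact_mod_cast hω
  have hcos : Continuous fun t : ℝ => (Real.cos (ω * t - β) : ℂ) := by fun_prop
  have hsin : Continuous fun t : ℝ => (Real.sin (ω * t - β) : ℂ) := by fun_prop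
  set F : ℝ → ℂ := fun t =>
    (Real.sin (ω * t - β) : ℂ) / ω * a t + (Real.cos (ω * t - β) : ℂ) / ω ^ 2 * a' t
  have hF : ContinuousOn F (Icc u v) :=
    ((hsin.div_const _).continuousOn.mul ha).add ((hcos.div_const _).continuousOn.mul ha')
  have hF' : ∀ t ∈ Ioo u v, HasDerivAt F
      ((Real.cos (ω * t - β) : ℂ) * a t + (Real.cos (ω * t - β) : ℂ) * a'' t / ω ^ 2) t := by
    intro t ht
    refine ((((hasDerivAt_ofReal_sin_mul_sub β ω t).div_const (ω : ℂ)).mul (hda t ht)).add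
      (((hasDerivAt_ofReal_cos_mul_sub β ω t).div_const ((ω : ℂ) ^ 2)).mul
        (hda' t ht))).congr_deriv ?_
    push_cast
    field_simp
    ring
  have hint₁ : IntervalIntegrable (fun t => (Real.cos (ω * t - β) : ℂ) * a t) volume u v :=
    (hcos.continuousOn.mul ha).intervalIntegrable_of_Icc huv
  have hint₂ : IntervalIntegrable (fun t => (Real.cos (ω * t - β) : ℂ) * a'' t) volume u v :=
    ((intervalIntegrable_iff_integrableOn_Ioc_of_le huv).2 hint).continuousOn_mul
      hcos.continuousOn
  have hftc := integral_eq_sub_of_hasDerivAt_of_le huv hF hF' (hint₁.add (hint₂.div_const _))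
  rw [integral_add hint₁ (hint₂.div_const _), intervalIntegral.integral_div] at hftc
  simp only [F] at hftc
  linear_combination hftc

theorem norm_integral_cos_mul_sub_le (hω : ω ≠ 0) (huv : u ≤ v)
    (ha : ContinuousOn a (Icc u v))
    (ha' : ContinuousOn a' (Icc u v)) (hda : ∀ t ∈ Ioo u v, HasDerivAt a (a' t) t)
    (hda' : ∀ t ∈ Ioo u v, HasDerivAt a' (a'' t) t) (hint : IntegrableOn a'' (Ioc u v)) :
    ‖(∫ t in u..v, (Real.cos (ω * t - β) : ℂ) * a t)
        - ((Real.sin (ω * v - β) : ℂ) * a v - (Real.sin (ω * u - β) : ℂ) * a u) / ω‖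
      ≤ (‖a' u‖ + ‖a' v‖ + ∫ t in Ioc u v, ‖a'' t‖) / ω ^ 2 := by
  have hint'' :
      ‖∫ t in u..v, (Real.cos (ω * t - β) : ℂ) * a'' t‖ ≤ ∫ t in Ioc u v, ‖a'' t‖ := by
    rw [← integral_of_le huv]
    refine norm_integral_le_of_norm_le huv (Eventually.of_forall fun t _ => ?_)
      ((intervalIntegrable_iff_integrableOn_Ioc_of_le huv).2 hint.norm)
    exact norm_ofReal_cos_mul_le _ _
  rw [integral_cos_mul_eq hω huv ha ha' hda hda' hint, add_sub_assoc, add_sub_cancel_left,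
    ← sub_div, norm_div, norm_pow, Complex.norm_real, Real.norm_eq_abs, sq_abs]
  gcongr
  calc ‖(Real.cos (ω * v - β) : ℂ) * a' v - (Real.cos (ω * u - β) : ℂ) * a' u
        - ∫ t in u..v, (Real.cos (ω * t - β) : ℂ) * a'' t‖
      ≤ ‖(Real.cos (ω * v - β) : ℂ) * a' v‖ + ‖(Real.cos (ω * u - β) : ℂ) * a' u‖
        + ‖∫ t in u..v, (Real.cos (ω * t - β) : ℂ) * a'' t‖ :=
        norm_sub_le_of_le (norm_sub_le _ _) le_rfl
    _ ≤ ‖a' v‖ + ‖a' u‖ + ∫ t in Ioc u v, ‖a'' t‖ := by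
      gcongr <;> exact norm_ofReal_cos_mul_le _ _
    _ = ‖a' u‖ + ‖a' v‖ + ∫ t in Ioc u v, ‖a'' t‖ := by ring

theorem norm_integral_cos_mul_sub_le_of_contDiffOn {s : Set ℝ} (hs : UniqueDiffOn ℝ s)
    (ha : ContDiffOn ℝ 2 a s) (hω : ω ≠ 0) (huv : u ≤ v) (hsub : Icc u v ⊆ s)
    (hint : IntegrableOn (deriv (deriv a)) (Ioc u v)) :
    ‖(∫ t in u..v, (Real.cos (ω * t - β) : ℂ) * a t)
        - ((Real.sin (ω * v - β) : ℂ) * a v - (Real.sin (ω * u - β) : ℂ) * a u) / ω‖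
      ≤ (‖derivWithin a s u‖ + ‖derivWithin a s v‖
          + ∫ t in Ioc u v, ‖deriv (deriv a) t‖) / ω ^ 2 := by
  have hnhds : ∀ t ∈ Ioo u v, s ∈ 𝓝 t := fun t ht =>
    mem_of_superset (Ioo_mem_nhds ht.1 ht.2) (Ioo_subset_Icc_self.trans hsub)
  exact norm_integral_cos_mul_sub_le hω huv (ha.continuousOn.mono hsub)
    ((ha.continuousOn_derivWithin hs (by norm_num)).mono hsub)
    (fun t ht => ((ha.differentiableOn (by norm_num) t
      (hsub (Ioo_subset_Icc_self ht))).hasDerivWithinAt).hasDerivAt (hnhds t ht))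
    (fun t ht => ha.hasDerivAt_derivWithin_deriv (hnhds t ht)) hint

end Oscillatory

/-- The error of one integration by parts on `[u, v]` is
`cosRemainder β ω a v - cosRemainder β ω a u`, so these errors telescope over the pieces of `a`. -/
def cosRemainder (β ω : ℝ) (a : ℝ → ℂ) (b : ℝ) : ℂ :=
  (∫ t in (0)..b, (Real.cos (ω * t - β) : ℂ) * a t) - (Real.sin (ω * b - β) : ℂ) * a b / ω

section Remainder

variable {β ω : ℝ} {a : ℝ → ℂ}

theorem cosRemainder_zero : cosRemainder β ω a 0 = (Real.sin β : ℂ) * a 0 / ω := by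
  simp [cosRemainder, neg_div]

theorem cosRemainder_sub (ha : ContinuousOn a (Ici 0)) {u v : ℝ} (hu : 0 ≤ u) (hv : 0 ≤ v) :
    cosRemainder β ω a v - cosRemainder β ω a u
      = (∫ t in u..v, (Real.cos (ω * t - β) : ℂ) * a t)
        - ((Real.sin (ω * v - β) : ℂ) * a v - (Real.sin (ω * u - β) : ℂ) * a u) / ω := by
  have hint : ∀ b, 0 ≤ b →
      IntervalIntegrable (fun t => (Real.cos (ω * t - β) : ℂ) * a t) volume 0 b := fun b hb =>
    ((by fun_prop : Continuous fun t : ℝ => (Real.cos (ω * t - β) : ℂ)).continuousOn.mul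
      (ha.mono Icc_subset_Ici_self)).intervalIntegrable_of_Icc hb
  rw [cosRemainder, cosRemainder, ← integral_interval_sub_left (hint v hv) (hint u hu)]
  ring

theorem tendsto_cosRemainder (ha_int : IntegrableOn a (Ioi 0))
    (ha_lim : Tendsto a atTop (𝓝 0)) :
    Tendsto (cosRemainder β ω a) atTop
      (𝓝 (∫ t in Ioi 0, (Real.cos (ω * t - β) : ℂ) * a t)) := by
  have hint : IntegrableOn (fun t => (Real.cos (ω * t - β) : ℂ) * a t) (Ioi 0) :=
    ha_int.bdd_mul (c := 1) (by fun_prop) (Eventually.of_forall fun t => by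
      rw [Complex.norm_real, Real.norm_eq_abs]
      exact Real.abs_cos_le_one _)
  have hboundary : Tendsto (fun b => (Real.sin (ω * b - β) : ℂ) * a b / ω) atTop (𝓝 0) := by
    refine squeeze_zero_norm (fun b => ?_) (by simpa using ha_lim.norm.div_const |ω|)
    rw [norm_div, norm_mul, Complex.norm_real, Complex.norm_real, Real.norm_eq_abs,
      Real.norm_eq_abs]
    exact div_le_div_of_nonneg_right
      (mul_le_of_le_one_left (norm_nonneg (a b)) (Real.abs_sin_le_one _)) (abs_nonneg ω)
  have h := (intervalIntegral_tendsto_integral_Ioi 0 hint tendsto_id).sub hboundary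
  rwa [sub_zero] at h

end Remainder

section PiecewiseEstimate

variable {β : ℝ} {a : ℝ → ℂ}

theorem exists_norm_cosRemainder_sub_le (ha_cont : ContinuousOn a (Ici 0))
    (ha_pw : PiecewiseCn 2 a) (ha_dd : IntegrableOn (fun t => deriv (deriv a) t) (Ioi 0)) :
    ∃ C t₀ : ℝ, ∀ ω ≠ 0, ∀ b ≥ t₀,
      ‖cosRemainder β ω a b - cosRemainder β ω a 0‖ ≤ C / ω ^ 2 := by
  obtain ⟨N, t, ht0, ht_mono, hpiece, htail⟩ := ha_pw
  set J := ∫ s in Ioi 0, ‖deriv (deriv a) s‖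
  have hint : ∀ u v, 0 ≤ u → IntegrableOn (deriv (deriv a)) (Ioc u v) := fun u v hu =>
    ha_dd.mono_set fun s hs => hu.trans_lt hs.1
  have hJ : ∀ u v, 0 ≤ u → ∫ s in Ioc u v, ‖deriv (deriv a) s‖ ≤ J := fun u v hu =>
    setIntegral_mono_set ha_dd.norm (Eventually.of_forall fun s => norm_nonneg _)
      (Eventually.of_forall fun s hs => hu.trans_lt hs.1)
  have ht_nonneg : ∀ i, 0 ≤ t i := fun i => ht0 ▸ ht_mono.monotone (Fin.zero_le i)
  set tN := t (Fin.last N)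
  set d := derivWithin a (Ici tN)
  have hd_bound : ∀ b ≥ tN, ‖d b‖ ≤ ‖d tN‖ + J := fun b hb =>
    (norm_le_norm_add_integral_norm_deriv hb
      ((htail.continuousOn_derivWithin (uniqueDiffOn_Ici tN) (by norm_num)).mono
        Icc_subset_Ici_self)
      (fun s hs => htail.hasDerivAt_derivWithin_deriv (Ici_mem_nhds hs.1))
      (hint _ _ (ht_nonneg _))).trans (by gcongr; exact hJ _ _ (ht_nonneg _))
  refine ⟨∑ i : Fin N, (‖derivWithin a (Icc (t i.castSucc) (t i.succ)) (t i.castSucc)‖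
      + ‖derivWithin a (Icc (t i.castSucc) (t i.succ)) (t i.succ)‖ + J)
    + (‖d tN‖ + (‖d tN‖ + J) + J), tN, fun ω hω b hb => ?_⟩
  have hsplit : cosRemainder β ω a b - cosRemainder β ω a 0
      = ∑ i : Fin N, (cosRemainder β ω a (t i.succ) - cosRemainder β ω a (t i.castSucc))
        + (cosRemainder β ω a b - cosRemainder β ω a tN) := by
    rw [Fin.sum_succ_sub_castSucc (fun i => cosRemainder β ω a (t i)), ht0]
    abel
  rw [hsplit, add_div, Finset.sum_div]
  refine (norm_add_le _ _).trans (add_le_add ((norm_sum_le _ _).trans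
    (Finset.sum_le_sum fun i _ => ?_)) ?_)
  · have hlt := ht_mono (show i.castSucc < i.succ from Fin.castSucc_lt_succ)
    rw [cosRemainder_sub ha_cont (ht_nonneg _) (ht_nonneg _)]
    refine (norm_integral_cos_mul_sub_le_of_contDiffOn (uniqueDiffOn_Icc hlt) (hpiece i) hω
      hlt.le subset_rfl (hint _ _ (ht_nonneg _))).trans ?_
    gcongr
    exact hJ _ _ (ht_nonneg _)
  · rw [cosRemainder_sub (u := tN) ha_cont (ht_nonneg _) ((ht_nonneg _).trans hb)]
    refine (norm_integral_cos_mul_sub_le_of_contDiffOn (uniqueDiffOn_Ici tN) htail hω hb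
      Icc_subset_Ici_self (hint _ _ (ht_nonneg _))).trans ?_
    gcongr
    · exact hd_bound b hb
    · exact hJ _ _ (ht_nonneg _)

theorem exists_norm_integral_cos_mul_sub_le (ha_int : IntegrableOn a (Ioi 0))
    (ha_cont : ContinuousOn a (Ici 0)) (ha_pw : PiecewiseCn 2 a)
    (ha_lim : Tendsto a atTop (𝓝 0))
    (ha_dd : IntegrableOn (fun t => deriv (deriv a) t) (Ioi 0)) :
    ∃ C : ℝ, ∀ ω ≠ 0,
      ‖(∫ t in Ioi 0, (Real.cos (ω * t - β) : ℂ) * a t) - (Real.sin β : ℂ) * a 0 / ω‖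
        ≤ C / ω ^ 2 := by
  obtain ⟨C, t₀, hC⟩ := exists_norm_cosRemainder_sub_le (β := β) ha_cont ha_pw ha_dd
  refine ⟨C, fun ω hω => ?_⟩
  rw [← cosRemainder_zero]
  exact le_of_tendsto ((tendsto_cosRemainder ha_int ha_lim).sub_const _).norm
    (eventually_ge_atTop t₀ |>.mono fun b hb => hC ω hω b hb)

end PiecewiseEstimate

theorem continuous_integral_cos_mul_sub {a : ℝ → ℂ} (β : ℝ) (ha : IntegrableOn a (Ioi 0)) :
    Continuous fun ω : ℝ => ∫ t in Ioi 0, (Real.cos (ω * t - β) : ℂ) * a t := by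
  refine continuous_of_dominated (bound := fun t => ‖a t‖) (fun ω => ?_)
    (fun ω => Eventually.of_forall fun t => norm_ofReal_cos_mul_le _ _) ha.norm
    (Eventually.of_forall fun t => by fun_prop)
  exact (by fun_prop : Continuous fun t : ℝ => (Real.cos (ω * t - β) : ℂ)).aestronglyMeasurable.mul
    ha.aestronglyMeasurable

theorem integrableOn_Ici_inv_sq {c : ℝ} (hc : 0 < c) :
    IntegrableOn (fun x : ℝ => (x ^ 2)⁻¹) (Ici c) := by
  rw [integrableOn_Ici_iff_integrableOn_Ioi]
  refine (integrableOn_Ioi_rpow_of_lt (by norm_num : (-2 : ℝ) < -1) hc).congr_fun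
    (fun x hx => ?_) measurableSet_Ioi
  simp only [Real.rpow_neg (hc.trans hx).le, Real.rpow_two]

theorem integrableOn_norm_sq_of_norm_le_div_add_sq {E : Type*} [NormedAddCommGroup E]
    {K : ℝ → ℝ → E} {c C : ℝ} (hc : 0 < c)
    (hK : AEStronglyMeasurable (fun p : ℝ × ℝ => K p.1 p.2) (volume.restrict (Ici c ×ˢ Ici c)))
    (hbound : ∀ x, c ≤ x → ∀ y, c ≤ y → ‖K x y‖ ≤ C / (x + y) ^ 2) :
    IntegrableOn (fun p : ℝ × ℝ => ‖K p.1 p.2‖ ^ 2) (Ici c ×ˢ Ici c) := by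
  have hmajorant : IntegrableOn (fun p : ℝ × ℝ => C ^ 2 / 16 * ((p.1 ^ 2)⁻¹ * (p.2 ^ 2)⁻¹))
      (Ici c ×ˢ Ici c) := by
    rw [IntegrableOn, Measure.volume_eq_prod, ← Measure.prod_restrict]
    exact ((integrableOn_Ici_inv_sq hc).mul_prod (integrableOn_Ici_inv_sq hc)).const_mul _
  refine hmajorant.mono' (hK.norm.aemeasurable.pow_const 2).aestronglyMeasurable ?_
  rw [ae_restrict_iff' (measurableSet_Ici.prod measurableSet_Ici)]
  refine Eventually.of_forall fun ⟨x, y⟩ ⟨(hx : c ≤ x), (hy : c ≤ y)⟩ => ?_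
  have hx0 : 0 < x := hc.trans_le hx
  have hy0 : 0 < y := hc.trans_le hy
  rw [Real.norm_eq_abs, abs_of_nonneg (by positivity)]
  calc ‖K x y‖ ^ 2 ≤ (C / (x + y) ^ 2) ^ 2 := pow_le_pow_left₀ (norm_nonneg _) (hbound x hx y hy) 2
    _ = C ^ 2 / ((x + y) ^ 2) ^ 2 := div_pow _ _ _
    -- `(x + y)² ≥ 4xy`
    _ ≤ C ^ 2 / (16 * x ^ 2 * y ^ 2) := by
      gcongr
      nlinarith [sq_nonneg (x - y), mul_pos hx0 hy0]
    _ = C ^ 2 / 16 * ((x ^ 2)⁻¹ * (y ^ 2)⁻¹) := by ring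

theorem hankel_kernel_hilbertSchmidt_general
    (ν : ℝ) (a : ℝ → ℂ)
    (ha_int : IntegrableOn a (Set.Ioi 0))
    (ha_cont : ContinuousOn a (Set.Ici 0))
    (ha_pw : PiecewiseCn 2 a)
    (ha_lim : Tendsto a atTop (nhds 0))
    (ha_dd : IntegrableOn (fun t : ℝ => deriv (deriv a) t) (Set.Ioi 0))
    (Hker : ℝ → ℝ → ℂ)
    (hHker : ∀ x y : ℝ, Hker x y =
      -((Real.sin (2 * (Real.pi * ν / 2 + Real.pi / 4)) : ℂ) * a 0) /
          ((Real.pi : ℂ) * ((x : ℂ) + (y : ℂ))) +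
        (1 / (Real.pi : ℂ)) *
          ∫ t in Set.Ioi (0 : ℝ),
            ((Real.cos ((x + y) * t - 2 * (Real.pi * ν / 2 + Real.pi / 4)) : ℝ) : ℂ) * a t) :
    (∃ C : ℝ, ∀ x : ℝ, 1 ≤ x → ∀ y : ℝ, 1 ≤ y → ‖Hker x y‖ ≤ C / (x + y) ^ 2) ∧
    IntegrableOn (fun p : ℝ × ℝ => ‖Hker p.1 p.2‖ ^ 2) (Set.Ici 1 ×ˢ Set.Ici 1) := by
  set β := 2 * (Real.pi * ν / 2 + Real.pi / 4)
  obtain ⟨C, hC⟩ := exists_norm_integral_cos_mul_sub_le (β := β) ha_int ha_cont ha_pw ha_lim ha_dd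
  have hHker' : ∀ x y : ℝ, x + y ≠ 0 → Hker x y =
      ((∫ t in Ioi 0, (Real.cos ((x + y) * t - β) : ℂ) * a t)
        - (Real.sin β : ℂ) * a 0 / (x + y : ℝ)) / Real.pi := by
    intro x y hxy
    have : (x : ℂ) + y ≠ 0 := by exact_mod_cast hxy
    rw [hHker]
    push_cast
    field_simp
    ring
  have hbound : ∀ x, 1 ≤ x → ∀ y, 1 ≤ y → ‖Hker x y‖ ≤ C / Real.pi / (x + y) ^ 2 := by
    intro x hx y hy
    rw [hHker' x y (by linarith), norm_div, Complex.norm_real, Real.norm_eq_abs,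
      abs_of_pos Real.pi_pos, div_right_comm]
    gcongr
    exact hC (x + y) (by linarith)
  have hmeas : Measurable fun p : ℝ × ℝ => Hker p.1 p.2 := by
    simp only [hHker]
    have hI := (continuous_integral_cos_mul_sub β ha_int).measurable.comp
      (measurable_fst.add measurable_snd)
    fun_prop
  exact ⟨⟨_, hbound⟩,
    integrableOn_norm_sq_of_norm_le_div_add_sq one_pos hmeas.aestronglyMeasurable hbound⟩

/-- Let `α = πν/2 + π/4` with `ν > -1`, and let
`a ∈ L^∞(ℝ₊) ∩ L¹(ℝ₊)` be continuous and piecewise `C²` on `[0,∞)` with `a(x) → 0` as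
`x → ∞` and `a'' ∈ L¹(ℝ₊)`. Then the kernel
`H_a(x,y) = -sin(2α) a(0)/(π(x+y)) + (1/π) ∫_0^∞ cos((x+y)t - 2α) a(t) dt`
satisfies `|H_a(x,y)| ≤ C/(x+y)²` for some `C `, and the corresponding integral operator
on `L²[1,∞)` is Hilbert–Schmidt (its kernel is square integrable on `[1,∞)²`). -/
theorem hankel_kernel_hilbertSchmidt
    (ν : ℝ) (hν : -1 < ν) (a : ℝ → ℂ)
    (ha_inf : MemLp a ⊤ (volume.restrict (Set.Ioi (0 : ℝ))))
    (ha_int : IntegrableOn a (Set.Ioi 0))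
    (ha_cont : ContinuousOn a (Set.Ici 0))
    (ha_pw : PiecewiseCn 2 a)
    (ha_lim : Tendsto a atTop (nhds 0))
    (ha_dd : IntegrableOn (fun t : ℝ => deriv (deriv a) t) (Set.Ioi 0))
    (Hker : ℝ → ℝ → ℂ)
    (hHker : ∀ x y : ℝ, Hker x y =
      -((Real.sin (2 * (Real.pi * ν / 2 + Real.pi / 4)) : ℂ) * a 0) /
          ((Real.pi : ℂ) * ((x : ℂ) + (y : ℂ))) +
        (1 / (Real.pi : ℂ)) *
          ∫ t in Set.Ioi (0 : ℝ),
            ((Real.cos ((x + y) * t - 2 * (Real.pi * ν / 2 + Real.pi / 4)) : ℝ) : ℂ) * a t) :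
    (∃ C : ℝ, ∀ x : ℝ, 1 ≤ x → ∀ y : ℝ, 1 ≤ y → ‖Hker x y‖ ≤ C / (x + y) ^ 2) ∧
    IntegrableOn (fun p : ℝ × ℝ => ‖Hker p.1 p.2‖ ^ 2) (Set.Ici 1 ×ˢ Set.Ici 1) :=
  hankel_kernel_hilbertSchmidt_general ν a ha_int ha_cont ha_pw ha_lim ha_dd Hker hHker

end
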